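/- arXiv:2006.02892 — 2 statements merged into one kernel-verified Lean document; each statement's English description precedes it below -/
import Mathlib

section
/- Let S = k[X, Y] be the polynomial ring over a field k and set R₁ = k[X², XY, Y², X³, Y³] ⊆ S. Then S is the integral closure of R₁ in its field of fractions, and R₁ is strictly closed (in S), hence weakly Arf. -/
open scoped TensorProduct

open MvPolynomial

/-- `R` is a weakly Arf ring. -/
def IsWeaklyArf (R : Type*) [CommRing R] : Prop :=
  ∀ x y z : R, x ∈ nonZeroDivisors R →
    (∃ u ∈ integralClosure R (FractionRing R),
        u * algebraMap R (FractionRing R) x = algebraMap R (FractionRing R) y) →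
    (∃ v ∈ integralClosure R (FractionRing R),
        v * algebraMap R (FractionRing R) x = algebraMap R (FractionRing R) z) →
    ∃ r : R, algebraMap R (FractionRing R) r * algebraMap R (FractionRing R) x
        = algebraMap R (FractionRing R) (y * z)

/-- `R` is strictly closed in the `R`-algebra `S`. -/
def IsStrictlyClosedIn (R S : Type*) [CommRing R] [CommRing S] [Algebra R S] : Prop :=
  ∀ s : S, s ⊗ₜ[R] (1 : S) = (1 : S) ⊗ₜ[R] s → s ∈ (algebraMap R S).range

/-- `R₁ = k[X², XY, Y², X³, Y³]` inside `S = k[X, Y]`. -/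
noncomputable def R₁alg (k : Type*) [Field k] : Subalgebra k (MvPolynomial (Fin 2) k) :=
  Algebra.adjoin k {X 0 ^ 2, X 0 * X 1, X 1 ^ 2, X 0 ^ 3, X 1 ^ 3}

/-!
Every monomial `XᵃYᵇ` other than the gaps `X, Y, X²Y, XY²` lies in `R₁`: those of even degree are
products of `X², XY, Y²`, the others are `X³` or `Y³` times one of even degree. Hence `X³S ⊆ R₁`,
so `R₁` and `S` have the same fraction field, and `S`, being integral over `R₁` (as `X², Y² ∈ R₁`)
and normal, is the integral closure of `R₁`.

For each gap `m` there is an `R₁`-balanced `k`-bilinear form `S × S → k`, e.g.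
`(f, g) ↦ f_{X²Y} g_1 + f_Y g_{X²} + f_X g_{XY}` for `m = X²Y`. It factors through `S ⊗_{R₁} S` and
takes the values `s_m` and `0` at `s ⊗ 1` and `1 ⊗ s`, so `s ⊗ 1 = 1 ⊗ s` kills every gap
coefficient of `s`. Finally, if `y/x, z/x ∈ S`, then `x, y, z` can be moved across the tensor sign
to get `yz/x ⊗ 1 = 1 ⊗ yz/x`, so strict closedness gives the weak Arf property.
-/

theorem TensorProduct.liftAddHom_tmul_one_eq_one_tmul {R S M : Type*} [CommSemiring R]
    [Semiring S] [Algebra R S] [AddCommMonoid M] (B : S →+ S →+ M)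
    (hB : ∀ (r : R) (f g : S), B (r • f) g = B f (r • g)) {s : S}
    (hs : s ⊗ₜ[R] (1 : S) = 1 ⊗ₜ[R] s) : B s 1 = B 1 s := by
  simpa using congrArg (TensorProduct.liftAddHom B hB) hs

theorem mul_mul_algebraMap_tmul_one_eq {R S : Type*} [CommSemiring R]
    [CommSemiring S] [Algebra R S] {x y z : R} {p q : S}
    (hp : p * algebraMap R S x = algebraMap R S y) (hq : q * algebraMap R S x = algebraMap R S z) :
    (p * q * algebraMap R S x) ⊗ₜ[R] (1 : S) = 1 ⊗ₜ[R] (p * q * algebraMap R S x) :=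
  calc (p * q * algebraMap R S x) ⊗ₜ[R] (1 : S)
      = (z • p) ⊗ₜ[R] (1 : S) := by rw [Algebra.smul_def, ← hq]; ring_nf
    _ = p ⊗ₜ[R] (x • q) := by
      rw [TensorProduct.smul_tmul, Algebra.smul_def, Algebra.smul_def, ← hq, mul_one, mul_comm]
    _ = (y • (1 : S)) ⊗ₜ[R] q := by
      rw [← TensorProduct.smul_tmul, Algebra.smul_def, Algebra.smul_def, ← hp, mul_one, mul_comm]
    _ = 1 ⊗ₜ[R] (p * q * algebraMap R S x) := by
      rw [TensorProduct.smul_tmul, Algebra.smul_def, ← hp]; ring_nf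

section FractionRing

variable {R S : Type*} [CommRing R] [CommRing S] [Algebra R S]

theorem IsFractionRing.of_mul_mem_range (K : Type*) [Field K] [Algebra S K] [Algebra R K]
    [IsScalarTower R S K] [IsFractionRing S K] [FaithfulSMul R S] (c : R) (hc : c ≠ 0)
    (hcS : ∀ s : S, ∃ r : R, algebraMap R S r = algebraMap R S c * s) : IsFractionRing R K := by
  have hinj : Function.Injective (algebraMap R K) := by
    rw [IsScalarTower.algebraMap_eq R S K]
    exact (IsFractionRing.injective S K).comp (FaithfulSMul.algebraMap_injective R S)
  have : FaithfulSMul R K := (faithfulSMul_iff_algebraMap_injective R K).mpr hinj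
  refine IsFractionRing.of_field R K fun z => ?_
  obtain ⟨a, b, -, rfl⟩ := IsFractionRing.div_surjective S z
  obtain ⟨ca, hca⟩ := hcS a
  obtain ⟨cb, hcb⟩ := hcS b
  refine ⟨ca, cb, ?_⟩
  have hc' : algebraMap R K c ≠ 0 := (map_ne_zero_iff _ hinj).mpr hc
  rw [IsScalarTower.algebraMap_apply R S K ca, IsScalarTower.algebraMap_apply R S K cb, hca, hcb,
    map_mul, map_mul, ← IsScalarTower.algebraMap_apply, mul_div_mul_left _ _ hc']

theorem isWeaklyArf_of_isStrictlyClosedIn (K : Type*) [CommRing K] [Algebra R K]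
    [IsFractionRing R K] [Algebra S K] [IsScalarTower R S K]
    (hSK : Function.Injective (algebraMap S K))
    (hint : (integralClosure R K : Set K) ⊆ Set.range (algebraMap S K))
    (hR : IsStrictlyClosedIn R S) : IsWeaklyArf R := by
  let ψ : FractionRing R ≃ₐ[R] K := IsLocalization.algEquiv (nonZeroDivisors R) _ _
  have quotient_mem : ∀ {x y : R} {u : FractionRing R}, u ∈ integralClosure R (FractionRing R) →
      u * algebraMap R _ x = algebraMap R _ y →
      ∃ p : S, p * algebraMap R S x = algebraMap R S y := by
    intro x y u hu hux
    obtain ⟨p, hp⟩ := hint ((isIntegral_algEquiv ψ).mpr hu)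
    refine ⟨p, hSK ?_⟩
    rw [map_mul, hp, ← IsScalarTower.algebraMap_apply, ← IsScalarTower.algebraMap_apply,
      ← ψ.commutes, ← ψ.commutes, ← map_mul, hux]
  rintro x y z - ⟨u, hu, hux⟩ ⟨v, hv, hvx⟩
  obtain ⟨p, hp⟩ := quotient_mem hu hux
  obtain ⟨q, hq⟩ := quotient_mem hv hvx
  obtain ⟨r, hr⟩ := hR _ (mul_mul_algebraMap_tmul_one_eq hp hq)
  have hrx : algebraMap R S (r * x) = algebraMap R S (y * z) := by
    rw [map_mul, map_mul, hr, ← hp, ← hq]; ring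
  refine ⟨r, ?_⟩
  rw [← map_mul]
  congr 1
  apply IsFractionRing.injective R K
  simpa only [← IsScalarTower.algebraMap_apply] using congrArg (algebraMap S K) hrx

end FractionRing

section Balancer

variable {k A M : Type*} [CommSemiring k] [CommSemiring A] [Algebra k A] [AddCommMonoid M]
  [Module k M]

def LinearMap.balancer (B : A →ₗ[k] A →ₗ[k] M) : Subalgebra k A where
  carrier := {r | ∀ f g, B (r * f) g = B f (r * g)}
  mul_mem' {r r'} hr hr' f g := by rw [mul_assoc, hr, hr', ← mul_assoc, mul_comm r']
  add_mem' hr hr' f g := by simp only [add_mul, map_add, LinearMap.add_apply, hr f g, hr' f g]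
  algebraMap_mem' c f g := by simp only [← Algebra.smul_def, map_smul, LinearMap.smul_apply]

theorem LinearMap.apply_one_eq_of_tmul_one_eq {B : A →ₗ[k] A →ₗ[k] M} {P : Subalgebra k A}
    (hP : P ≤ B.balancer) {s : A} (hs : s ⊗ₜ[P] (1 : A) = 1 ⊗ₜ[P] s) : B s 1 = B 1 s :=
  TensorProduct.liftAddHom_tmul_one_eq_one_tmul (toAddMonoidHom'.comp B.toAddMonoidHom)
    (fun r f g => hP r.2 f g) hs

@[simp]
theorem LinearMap.mem_balancer {B : A →ₗ[k] A →ₗ[k] M} {r : A} :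
    r ∈ B.balancer ↔ ∀ f g, B (r * f) g = B f (r * g) := Iff.rfl

end Balancer

section Coefficients

variable {σ k : Type*} [CommSemiring k]

noncomputable def coeffPairing (m n : σ →₀ ℕ) :
    MvPolynomial σ k →ₗ[k] MvPolynomial σ k →ₗ[k] k :=
  (LinearMap.mul k k).compl₁₂ (lcoeff k m) (lcoeff k n)

@[simp]
theorem coeffPairing_apply (m n : σ →₀ ℕ) (f g : MvPolynomial σ k) :
    coeffPairing m n f g = coeff m f * coeff n g := rfl

noncomputable abbrev expVec (a b : ℕ) : Fin 2 →₀ ℕ := Finsupp.single 0 a + Finsupp.single 1 b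

theorem coeff_expVec_one (a b : ℕ) :
    coeff (expVec a b) (1 : MvPolynomial (Fin 2) k) = if a = 0 ∧ b = 0 then 1 else 0 := by
  rw [coeff_one]
  exact if_congr (by simp [Finsupp.ext_iff, Fin.forall_fin_two, eq_comm]) rfl rfl

theorem coeff_expVec_X_pow_mul_X_pow_mul (a b c d : ℕ) (f : MvPolynomial (Fin 2) k) :
    coeff (expVec c d) (X 0 ^ a * X 1 ^ b * f)
      = if a ≤ c ∧ b ≤ d then coeff (expVec (c - a) (d - b)) f else 0 := by
  have hle : expVec a b ≤ expVec c d ↔ a ≤ c ∧ b ≤ d := by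
    simp [Finsupp.le_def, Fin.forall_fin_two]
  have hsub : expVec c d - expVec a b = expVec (c - a) (d - b) := by
    ext i; fin_cases i <;> simp
  rw [X_pow_eq_monomial, X_pow_eq_monomial, monomial_mul, one_mul, coeff_monomial_mul',
    hsub, one_mul]
  exact if_congr hle rfl rfl

theorem monomial_eq_C_mul_X_pow_mul_X_pow (d : Fin 2 →₀ ℕ) (c : k) :
    monomial d c = C c * (X 0 ^ d 0 * X 1 ^ d 1) := by
  rw [monomial_eq, Finsupp.prod_fintype _ _ fun _ => pow_zero _, Fin.prod_univ_two]

end Coefficients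

section R₁alg

variable {k : Type*} [Field k]

theorem X_pow_mul_X_pow_mem_R₁alg_of_even {a b : ℕ} (h : Even (a + b)) :
    (X 0 : MvPolynomial (Fin 2) k) ^ a * X 1 ^ b ∈ R₁alg k := by
  rcases Nat.even_or_odd' a with ⟨i, rfl | rfl⟩ <;> rcases Nat.even_or_odd' b with ⟨j, rfl | rfl⟩
  · rw [pow_mul, pow_mul]
    exact mul_mem (pow_mem (Algebra.subset_adjoin (by simp)) _)
      (pow_mem (Algebra.subset_adjoin (by simp)) _)
  · grind
  · grind
  · rw [show (X 0 : MvPolynomial (Fin 2) k) ^ (2 * i + 1) * X 1 ^ (2 * j + 1)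
        = X 0 * X 1 * ((X 0 ^ 2) ^ i * (X 1 ^ 2) ^ j) by ring]
    exact mul_mem (Algebra.subset_adjoin (by simp)) (mul_mem
      (pow_mem (Algebra.subset_adjoin (by simp)) _) (pow_mem (Algebra.subset_adjoin (by simp)) _))

theorem X_pow_mul_X_pow_mem_R₁alg {a b : ℕ} (h : Even (a + b) ∨ 3 ≤ a ∨ 3 ≤ b) :
    (X 0 : MvPolynomial (Fin 2) k) ^ a * X 1 ^ b ∈ R₁alg k := by
  by_cases hab : Even (a + b)
  · exact X_pow_mul_X_pow_mem_R₁alg_of_even hab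
  rcases h.resolve_left hab with h | h
  · obtain ⟨a, rfl⟩ := Nat.exists_eq_add_of_le h
    rw [pow_add, mul_assoc]
    exact mul_mem (Algebra.subset_adjoin (by simp)) (X_pow_mul_X_pow_mem_R₁alg_of_even (by grind))
  · obtain ⟨b, rfl⟩ := Nat.exists_eq_add_of_le h
    rw [pow_add, mul_left_comm]
    exact mul_mem (Algebra.subset_adjoin (by simp)) (X_pow_mul_X_pow_mem_R₁alg_of_even (by grind))

theorem mem_R₁alg_of_support {s : MvPolynomial (Fin 2) k}
    (h : ∀ d ∈ s.support, Even (d 0 + d 1) ∨ 3 ≤ d 0 ∨ 3 ≤ d 1) : s ∈ R₁alg k := by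
  rw [s.as_sum]
  refine sum_mem fun d hd => ?_
  rw [monomial_eq_C_mul_X_pow_mul_X_pow]
  exact mul_mem (Subalgebra.algebraMap_mem _ _) (X_pow_mul_X_pow_mem_R₁alg (h d hd))

theorem X_pow_three_mul_mem_R₁alg (f : MvPolynomial (Fin 2) k) : X 0 ^ 3 * f ∈ R₁alg k := by
  classical
  refine mem_R₁alg_of_support fun d hd => Or.inr (Or.inl ?_)
  rw [mem_support_iff, X_pow_eq_monomial, coeff_monomial_mul'] at hd
  exact Finsupp.single_le_iff.mp (of_not_not fun h => hd (if_neg h))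

theorem isIntegral_X_over_R₁alg (i : Fin 2) :
    IsIntegral (R₁alg k) (X i : MvPolynomial (Fin 2) k) := by
  have hsq : (X i : MvPolynomial (Fin 2) k) ^ 2 ∈ R₁alg k := by
    fin_cases i
    · simpa using X_pow_mul_X_pow_mem_R₁alg (k := k) (a := 2) (b := 0) (by decide)
    · simpa using X_pow_mul_X_pow_mem_R₁alg (k := k) (a := 0) (b := 2) (by decide)
  exact .of_pow two_pos (isIntegral_algebraMap (x := (⟨_, hsq⟩ : R₁alg k)))

instance : Algebra.IsIntegral (R₁alg k) (MvPolynomial (Fin 2) k) where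
  isIntegral f := by
    induction f using MvPolynomial.induction_on with
    | C c => exact isIntegral_algebraMap (x := (⟨C c, Subalgebra.algebraMap_mem _ c⟩ : R₁alg k))
    | add p q hp hq => exact hp.add hq
    | mul_X p i hp => exact hp.mul (isIntegral_X_over_R₁alg i)

theorem R₁alg_le_balancer {M : Type*} [AddCommMonoid M] [Module k M]
    {B : MvPolynomial (Fin 2) k →ₗ[k] MvPolynomial (Fin 2) k →ₗ[k] M}
    (h : ∀ ab ∈ [(2, 0), (1, 1), (0, 2), (3, 0), (0, 3)], ∀ f g,
      B (X 0 ^ ab.1 * X 1 ^ ab.2 * f) g = B f (X 0 ^ ab.1 * X 1 ^ ab.2 * g)) :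
    R₁alg k ≤ B.balancer := by
  refine Algebra.adjoin_le ?_
  rintro _ (rfl | rfl | rfl | rfl | rfl) <;> rw [SetLike.mem_coe, LinearMap.mem_balancer]
  · simpa using h (2, 0) (by simp)
  · simpa using h (1, 1) (by simp)
  · simpa using h (0, 2) (by simp)
  · simpa using h (3, 0) (by simp)
  · simpa using h (0, 3) (by simp)

theorem coeff_gap_eq_zero_of_tmul_one_eq {s : MvPolynomial (Fin 2) k}
    (hs : s ⊗ₜ[R₁alg k] (1 : MvPolynomial (Fin 2) k) = 1 ⊗ₜ[R₁alg k] s) :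
    coeff (expVec 1 0) s = 0 ∧ coeff (expVec 0 1) s = 0 ∧
      coeff (expVec 2 1) s = 0 ∧ coeff (expVec 1 2) s = 0 := by
  have hX := LinearMap.apply_one_eq_of_tmul_one_eq (B := coeffPairing (expVec 1 0) (expVec 0 0))
    (R₁alg_le_balancer (by simp [coeff_expVec_X_pow_mul_X_pow_mul])) hs
  have hY := LinearMap.apply_one_eq_of_tmul_one_eq (B := coeffPairing (expVec 0 1) (expVec 0 0))
    (R₁alg_le_balancer (by simp [coeff_expVec_X_pow_mul_X_pow_mul])) hs
  have hX2Y := LinearMap.apply_one_eq_of_tmul_one_eq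
    (B := coeffPairing (expVec 2 1) (expVec 0 0) + coeffPairing (expVec 0 1) (expVec 2 0) +
      coeffPairing (expVec 1 0) (expVec 1 1))
    (R₁alg_le_balancer (by simp [coeff_expVec_X_pow_mul_X_pow_mul])) hs
  have hXY2 := LinearMap.apply_one_eq_of_tmul_one_eq
    (B := coeffPairing (expVec 1 2) (expVec 0 0) + coeffPairing (expVec 1 0) (expVec 0 2) +
      coeffPairing (expVec 0 1) (expVec 1 1))
    (R₁alg_le_balancer (by simp [coeff_expVec_X_pow_mul_X_pow_mul])) hs
  simp [coeff_expVec_one] at hX hY hX2Y hXY2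
  exact ⟨hX, hY, hX2Y, hXY2⟩

theorem isStrictlyClosedIn_R₁alg :
    IsStrictlyClosedIn (R₁alg k) (MvPolynomial (Fin 2) k) := by
  intro s hs
  obtain ⟨h10, h01, h21, h12⟩ := coeff_gap_eq_zero_of_tmul_one_eq hs
  refine ⟨⟨s, mem_R₁alg_of_support fun d hd => ?_⟩, rfl⟩
  obtain ⟨a, b, rfl⟩ : ∃ a b, d = expVec a b := ⟨d 0, d 1, by ext i; fin_cases i <;> simp⟩
  rw [show expVec a b 0 = a by simp, show expVec a b 1 = b by simp]
  by_contra! ⟨hodd, ha, hb⟩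
  rw [mem_support_iff] at hd
  interval_cases a <;> interval_cases b <;> simp_all [Nat.odd_iff]

end R₁alg

/-- Let `S = k[X, Y]` and `R₁ = k[X², XY, Y², X³, Y³] ⊆ S`.  Then the
fraction field of `S` is a fraction field of `R₁`, `S` is the integral closure of `R₁` in it,
and `R₁` is strictly closed in `S`, hence weakly Arf. -/
theorem R₁alg_strictlyClosed_weaklyArf
    (k : Type*) [Field k]
    (K : Type*) [Field K] [Algebra (MvPolynomial (Fin 2) k) K]
    [IsFractionRing (MvPolynomial (Fin 2) k) K] :
    (letI : Algebra (R₁alg k) K :=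
      ((algebraMap (MvPolynomial (Fin 2) k) K).comp (R₁alg k).val.toRingHom).toAlgebra
     IsFractionRing (R₁alg k) K ∧
       (integralClosure (R₁alg k) K : Set K)
         = Set.range (algebraMap (MvPolynomial (Fin 2) k) K)) ∧
    IsStrictlyClosedIn (R₁alg k) (MvPolynomial (Fin 2) k) ∧
    IsWeaklyArf (R₁alg k) := by
  let : Algebra (R₁alg k) K :=
    ((algebraMap (MvPolynomial (Fin 2) k) K).comp (R₁alg k).val.toRingHom).toAlgebra
  -- Spelled out: elaboration would pick the subalgebra's own `SMul` on `K` instead.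
  have : @IsScalarTower (R₁alg k) (MvPolynomial (Fin 2) k) K Algebra.toSMul Algebra.toSMul
      Algebra.toSMul := IsScalarTower.of_algebraMap_eq fun _ => rfl
  have hfrac : IsFractionRing (R₁alg k) K :=
    IsFractionRing.of_mul_mem_range K ⟨X 0 ^ 3, by simpa using X_pow_three_mul_mem_R₁alg 1⟩
      (fun h => pow_ne_zero 3 (X_ne_zero 0) (congrArg Subtype.val h))
      fun f => ⟨⟨_, X_pow_three_mul_mem_R₁alg f⟩, rfl⟩
  have hint : (integralClosure (R₁alg k) K : Set K)
      = Set.range (algebraMap (MvPolynomial (Fin 2) k) K) :=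
    Set.ext fun _ => IsIntegralClosure.isIntegral_iff (A := MvPolynomial (Fin 2) k)
  exact ⟨⟨hfrac, hint⟩, isStrictlyClosedIn_R₁alg,
    isWeaklyArf_of_isStrictlyClosedIn K (IsFractionRing.injective _ K) hint.subset
      isStrictlyClosedIn_R₁alg⟩
end

section
/- Let R be a Noetherian reduced ring with exactly two minimal primes 𝔭₁, 𝔭₂, and assume that the quotient rings R/𝔭₁ and R/𝔭₂ are integrally closed (normal) domains. Then R is strictly closed (its integral closure in Q(R) being R̄ = R/𝔭₁ × R/𝔭₂ via the diagonal embedding), and hence R is a weakly Arf ring. -/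
/-!
Since `p₁ ⊓ p₂ = 0`, an element `c₂ ∈ p₂ \ p₁` annihilates `p₁`, so non-zerodivisors of `R` stay
nonzero in `R/p₁` and `Q(R)` maps to `Frac(R/p₁)`; normality of `R/p₁` makes this map send `R̄`
into `R/p₁`. The resulting map `R̄ → R/p₁ × R/p₂` is injective because `c₁ + c₂` is a
non-zerodivisor. If `s ⊗ 1 = 1 ⊗ s`, pushing this identity to `R/p₁ ⊗_R R/p₂ = R/(p₁ + p₂)` shows
that the two components of `s` agree modulo `p₁ + p₂`, so they are the images of one `r ∈ R`.

Strict closedness gives weak Arf-ness: for `u = y/x` and `v = z/x` in `R̄`, the element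
`zu = yv` satisfies `zu ⊗ 1 = u ⊗ xv = xu ⊗ v = 1 ⊗ yv`.
-/

open scoped TensorProduct

/-- `R` is strictly closed (in the integral closure `R̄` of `R` in its total ring of
fractions `Q(R)`). -/
def IsStrictlyClosed (R : Type*) [CommRing R] : Prop :=
  IsStrictlyClosedIn R (integralClosure R (FractionRing R))

open scoped nonZeroDivisors

theorem IsStrictlyClosedIn.exists_algebraMap_eq_smul {R S : Type*} [CommRing R] [CommRing S]
    [Algebra R S] (h : IsStrictlyClosedIn R S) {x y z : R} {u v : S}
    (hu : x • u = algebraMap R S y) (hv : x • v = algebraMap R S z) (huv : y • v = z • u) :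
    ∃ r : R, algebraMap R S r = z • u := by
  refine h (z • u) ?_
  calc (z • u) ⊗ₜ[R] (1 : S)
      = u ⊗ₜ[R] algebraMap R S z := by rw [TensorProduct.smul_tmul, Algebra.algebraMap_eq_smul_one]
    _ = (x • u) ⊗ₜ[R] v := by rw [← hv, TensorProduct.smul_tmul]
    _ = (1 : S) ⊗ₜ[R] (z • u) := by
      rw [hu, Algebra.algebraMap_eq_smul_one, TensorProduct.smul_tmul, huv]

theorem IsStrictlyClosed.isWeaklyArf {R : Type*} [CommRing R] (h : IsStrictlyClosed R) :
    IsWeaklyArf R := by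
  rintro x y z - ⟨u, hu, hux⟩ ⟨v, hv, hvx⟩
  have hxu : x • (⟨u, hu⟩ : integralClosure R (FractionRing R)) = algebraMap R _ y :=
    Subtype.ext <| by simp [Algebra.smul_def, ← hux, mul_comm]
  have hxv : x • (⟨v, hv⟩ : integralClosure R (FractionRing R)) = algebraMap R _ z :=
    Subtype.ext <| by simp [Algebra.smul_def, ← hvx, mul_comm]
  have hyv : y • (⟨v, hv⟩ : integralClosure R (FractionRing R)) = z • ⟨u, hu⟩ :=
    Subtype.ext <| by simp [Algebra.smul_def, ← hux, ← hvx]; ring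
  obtain ⟨r, hr⟩ := h.exists_algebraMap_eq_smul hxu hxv hyv
  refine ⟨r, ?_⟩
  have hr' : algebraMap R (FractionRing R) r = algebraMap R _ z * u := by
    simpa [Algebra.smul_def] using congr_arg Subtype.val hr
  rw [hr', mul_assoc, hux, map_mul, mul_comm]

theorem Ideal.Quotient.exists_mk_eq_of_factor_eq {R : Type*} [CommRing R] {I J : Ideal R}
    {a : R ⧸ I} {b : R ⧸ J}
    (h : factor (le_sup_left : I ≤ I ⊔ J) a = factor (le_sup_right : J ≤ I ⊔ J) b) :
    ∃ r : R, mk I r = a ∧ mk J r = b := by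
  obtain ⟨a, rfl⟩ := mk_surjective a
  obtain ⟨b, rfl⟩ := mk_surjective b
  rw [factor_mk, factor_mk, Ideal.Quotient.eq] at h
  obtain ⟨i, hi, j, hj, hij⟩ := Submodule.mem_sup.mp h
  refine ⟨a - i, ?_, ?_⟩ <;> rw [Ideal.Quotient.eq]
  · simpa using hi
  · rwa [show a - i - b = j by linear_combination -hij]

theorem isStrictlyClosedIn_of_injective_prod {R S : Type*} [CommRing R] [CommRing S] [Algebra R S]
    {I J : Ideal R} (f : S →ₐ[R] R ⧸ I) (g : S →ₐ[R] R ⧸ J)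
    (hfg : Function.Injective (f.prod g)) : IsStrictlyClosedIn R S := by
  intro s hs
  let πI := Ideal.Quotient.factorₐ R (le_sup_left : I ≤ I ⊔ J)
  let πJ := Ideal.Quotient.factorₐ R (le_sup_right : J ≤ I ⊔ J)
  have hfac : πI (f s) = πJ (g s) := by
    simpa using congr_arg (Algebra.TensorProduct.lift (πI.comp f) (πJ.comp g) fun _ _ ↦ .all _ _) hs
  obtain ⟨r, hrI, hrJ⟩ := Ideal.Quotient.exists_mk_eq_of_factor_eq hfac
  exact ⟨r, hfg <| Prod.ext (by simpa using hrI) (by simpa using hrJ)⟩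

theorem IsIntegrallyClosed.exists_algHom_integralClosure {R A B K : Type*} [CommRing R]
    [CommRing A] [Algebra R A] [CommRing B] [Algebra R B] [IsIntegrallyClosed B] [CommRing K]
    [Algebra R K] [Algebra B K] [IsScalarTower R B K] [IsFractionRing B K] (ℓ : A →ₐ[R] K) :
    ∃ f : integralClosure R A →ₐ[R] B, ∀ s, algebraMap B K (f s) = ℓ s := by
  let j := IsScalarTower.toAlgHom R B K
  let e := AlgEquiv.ofInjective j (IsFractionRing.injective B K)
  have hrange (s : integralClosure R A) : (ℓ.comp (integralClosure R A).val) s ∈ j.range :=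
    isIntegral_iff.mp (s.2.map ℓ).tower_top
  exact ⟨e.symm.toAlgHom.comp ((ℓ.comp (integralClosure R A).val).codRestrict j.range hrange),
    fun s ↦ (AlgEquiv.ofInjective_apply j _ _).symm.trans
      (congr_arg Subtype.val (e.apply_symm_apply _))⟩

section Quotient

variable {R : Type*} [CommRing R] {p : Ideal R} {c : R}

theorem algebraMap_fractionRing_quotient_eq_zero_iff {a : R} :
    algebraMap R (FractionRing (R ⧸ p)) a = 0 ↔ a ∈ p := by
  rw [IsScalarTower.algebraMap_apply R (R ⧸ p),
    map_eq_zero_iff _ (IsFractionRing.injective _ _), Ideal.Quotient.algebraMap_eq,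
    Ideal.Quotient.eq_zero_iff_mem]

variable [p.IsPrime]

theorem exists_algHom_fractionRing_quotient (hc : c ∉ p) (hcp : ∀ w ∈ p, c * w = 0) :
    ∃ ℓ : FractionRing R →ₐ[R] FractionRing (R ⧸ p),
      ∀ w, ℓ w = 0 → algebraMap R (FractionRing R) c * w = 0 := by
  have hunit (t : R⁰) : IsUnit (Algebra.ofId R (FractionRing (R ⧸ p)) t) := by
    refine isUnit_iff_ne_zero.mpr fun ht ↦ hc ?_
    have hct : c * t = 0 := hcp t (algebraMap_fractionRing_quotient_eq_zero_iff.mp ht)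
    rw [(mem_nonZeroDivisors_iff_right.mp t.2 c hct)]
    exact p.zero_mem
  let ℓ : FractionRing R →ₐ[R] FractionRing (R ⧸ p) := IsLocalization.liftAlgHom (M := R⁰) hunit
  refine ⟨ℓ, fun w hw ↦ ?_⟩
  obtain ⟨⟨a, t⟩, hat⟩ := IsLocalization.surj R⁰ w
  have ha : a ∈ p := by
    rw [← algebraMap_fractionRing_quotient_eq_zero_iff, ← ℓ.commutes, ← hat, map_mul, hw, zero_mul]
  refine (IsLocalization.map_units (FractionRing R) t).mul_left_eq_zero.mp ?_
  rw [mul_assoc, hat, ← map_mul, hcp a ha, map_zero]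

theorem exists_algHom_integralClosure_quotient [IsIntegrallyClosed (R ⧸ p)] (hc : c ∉ p)
    (hcp : ∀ w ∈ p, c * w = 0) :
    ∃ f : integralClosure R (FractionRing R) →ₐ[R] R ⧸ p,
      ∀ s, f s = 0 → algebraMap R (FractionRing R) c * s = 0 := by
  obtain ⟨ℓ, hℓ⟩ := exists_algHom_fractionRing_quotient hc hcp
  obtain ⟨f, hf⟩ := IsIntegrallyClosed.exists_algHom_integralClosure (B := R ⧸ p) ℓ
  exact ⟨f, fun s hs ↦ hℓ s (by rw [← hf, hs, map_zero])⟩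

end Quotient

section TwoPrimes

variable {R : Type*} [CommRing R] {p₁ p₂ : Ideal R}

theorem Ideal.mul_eq_zero_of_inf_eq_bot (h : p₁ ⊓ p₂ = ⊥) {a b : R} (ha : a ∈ p₁)
    (hb : b ∈ p₂) : a * b = 0 := by
  rw [← Ideal.mem_bot, ← h]
  exact Ideal.mul_le_inf (Ideal.mul_mem_mul ha hb)

theorem Ideal.inf_eq_bot_of_minimalPrimes_eq_pair [IsReduced R]
    (h : minimalPrimes R = {p₁, p₂}) : p₁ ⊓ p₂ = ⊥ := by
  rw [← sInf_pair, ← h, Ideal.sInf_minimalPrimes, Ideal.radical_bot_of_isReduced]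

theorem Ideal.add_mem_nonZeroDivisors_of_inf_eq_bot [p₁.IsPrime] [p₂.IsPrime]
    (h : p₁ ⊓ p₂ = ⊥) {c₁ c₂ : R} (hc₁ : c₁ ∈ p₁) (hc₁' : c₁ ∉ p₂) (hc₂ : c₂ ∈ p₂)
    (hc₂' : c₂ ∉ p₁) : c₁ + c₂ ∈ R⁰ := by
  refine mem_nonZeroDivisors_iff_right.mpr fun r hr ↦ ?_
  have hr₁ : r ∈ p₁ := by
    refine (Ideal.IsPrime.mem_or_mem ‹_› ?_).resolve_right hc₂'
    rw [show r * c₂ = r * (c₁ + c₂) - r * c₁ by ring, hr, zero_sub]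
    exact p₁.neg_mem (p₁.mul_mem_left r hc₁)
  have hr₂ : r ∈ p₂ := by
    refine (Ideal.IsPrime.mem_or_mem ‹_› ?_).resolve_right hc₁'
    rw [show r * c₁ = r * (c₁ + c₂) - r * c₂ by ring, hr, zero_sub]
    exact p₂.neg_mem (p₂.mul_mem_left r hc₂)
  simpa [h] using Ideal.mem_inf.mpr ⟨hr₁, hr₂⟩

end TwoPrimes

theorem strictlyClosed_of_two_minimalPrimes_general
    (R : Type*) [CommRing R] [IsReduced R]
    (p₁ p₂ : Ideal R) (hne : p₁ ≠ p₂) (hmin : minimalPrimes R = {p₁, p₂})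
    (h₁ : IsIntegrallyClosed (R ⧸ p₁)) (h₂ : IsIntegrallyClosed (R ⧸ p₂)) :
    IsStrictlyClosed R ∧ IsWeaklyArf R := by
  have hp₁ : Minimal Ideal.IsPrime p₁ :=
    (IsMinimalPrime.iff_minimal p₁).mp (hmin.ge (Set.mem_insert _ _))
  have hp₂ : Minimal Ideal.IsPrime p₂ :=
    (IsMinimalPrime.iff_minimal p₂).mp (hmin.ge (Set.mem_insert_of_mem _ rfl))
  have := hp₁.prop
  have := hp₂.prop
  have hinf : p₁ ⊓ p₂ = ⊥ := Ideal.inf_eq_bot_of_minimalPrimes_eq_pair hmin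
  obtain ⟨c₁, hc₁, hc₁'⟩ := SetLike.not_le_iff_exists.mp fun h ↦ hne (hp₂.eq_of_le hp₁.prop h)
  obtain ⟨c₂, hc₂, hc₂'⟩ := SetLike.not_le_iff_exists.mp fun h ↦ hne (hp₁.eq_of_le hp₂.prop h).symm
  obtain ⟨f₁, hf₁⟩ := exists_algHom_integralClosure_quotient hc₂' fun w hw ↦
    mul_comm w c₂ ▸ Ideal.mul_eq_zero_of_inf_eq_bot hinf hw hc₂
  obtain ⟨f₂, hf₂⟩ := exists_algHom_integralClosure_quotient hc₁' fun w hw ↦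
    Ideal.mul_eq_zero_of_inf_eq_bot hinf hc₁ hw
  have hunit : IsUnit (algebraMap R (FractionRing R) (c₁ + c₂)) :=
    IsLocalization.map_units _
      (⟨_, Ideal.add_mem_nonZeroDivisors_of_inf_eq_bot hinf hc₁ hc₁' hc₂ hc₂'⟩ : R⁰)
  have hinj : Function.Injective (f₁.prod f₂) := by
    refine (injective_iff_map_eq_zero _).mpr fun s hs ↦ Subtype.ext (hunit.mul_right_eq_zero.mp ?_)
    rw [map_add, add_mul, hf₂ s (congr_arg Prod.snd hs), hf₁ s (congr_arg Prod.fst hs), add_zero]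
  have hsc : IsStrictlyClosed R := isStrictlyClosedIn_of_injective_prod f₁ f₂ hinj
  exact ⟨hsc, hsc.isWeaklyArf⟩

/-- Let `R` be a Noetherian reduced ring with exactly two minimal primes
`𝔭₁ ≠ 𝔭₂`, and assume `R/𝔭₁` and `R/𝔭₂` are integrally closed domains.  Then `R` is strictly
closed, and hence `R` is a weakly Arf ring. -/
theorem strictlyClosed_of_two_minimalPrimes
    (R : Type*) [CommRing R] [IsNoetherianRing R] [IsReduced R]
    (p₁ p₂ : Ideal R) (hne : p₁ ≠ p₂) (hmin : minimalPrimes R = {p₁, p₂})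
    (h₁ : IsIntegrallyClosed (R ⧸ p₁)) (h₂ : IsIntegrallyClosed (R ⧸ p₂)) :
    IsStrictlyClosed R ∧ IsWeaklyArf R :=
  strictlyClosed_of_two_minimalPrimes_general R p₁ p₂ hne hmin h₁ h₂
end
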